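/- Let Y ⊆ ℝ^m be a nonempty convex compact set and let h : ℝ^m → ℝ be differentiable with M-Lipschitz gradient (M > 0). Then for every y ∈ Y and every η with 0 < η ≤ 1/M, the gradient mapping G_Y(y, ∇h(y), η) = (Π_Y(y + η ∇h(y)) − y)/η satisfies ‖G_Y(y, ∇h(y), η)‖² ≤ (2/η)·( max_{y'∈Y} h(y') − h(y) ). -/

import Mathlib

/-!
Write `v = Π_Y(y + η∇h(y))`. The variational inequality of the projection, tested at `y ∈ Y`,
gives `‖v - y‖² ≤ η⟪∇h(y), v - y⟫`. The descent lemma `h(y + d) ≥ h(y) + ⟪∇h(y), d⟫ - M‖d‖²/2`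
at `d = v - y`, together with `Mη ≤ 1`, then yields `h(v) ≥ h(y) + ‖v - y‖²/(2η)`,
and `h(v) ≤ max_Y h` since `v ∈ Y`.
-/

open Set

noncomputable section

abbrev Euc (n : ℕ) := EuclideanSpace ℝ (Fin n)

open scoped RealInnerProductSpace

section

variable {E : Type*} [NormedAddCommGroup E] [InnerProductSpace ℝ E]

theorem HasGradientAt.hasDerivAt_comp_add_smul [CompleteSpace E] {f : E → ℝ} {g x d : E} {t : ℝ}
    (hf : HasGradientAt f g (x + t • d)) :
    HasDerivAt (fun s : ℝ ↦ f (x + s • d)) ⟪g, d⟫ t := by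
  have hline : HasDerivAt (fun s : ℝ ↦ x + s • d) d t := by
    simpa using ((hasDerivAt_id t).smul_const d).const_add x
  have := hf.hasFDerivAt.comp_hasDerivAt t hline
  rw [InnerProductSpace.toDual_apply_apply] at this
  exact this

theorem apply_add_ge_of_gradient_lipschitz [CompleteSpace E] {f : E → ℝ} {f' : E → E} {M : ℝ}
    (hf : ∀ x, HasGradientAt f (f' x) x) (hlip : ∀ x y, ‖f' x - f' y‖ ≤ M * ‖x - y‖)
    (x d : E) : f x + ⟪f' x, d⟫ - M / 2 * ‖d‖ ^ 2 ≤ f (x + d) := by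
  set φ : ℝ → ℝ := fun t ↦ f (x + t • d) - t * ⟪f' x, d⟫ + M / 2 * t ^ 2 * ‖d‖ ^ 2
  have hφ' : ∀ t, HasDerivAt φ (⟪f' (x + t • d) - f' x, d⟫ + M * t * ‖d‖ ^ 2) t := by
    intro t
    have := (((hf (x + t • d)).hasDerivAt_comp_add_smul).sub
      ((hasDerivAt_id t).mul_const ⟪f' x, d⟫)).add
      (((hasDerivAt_pow 2 t).const_mul (M / 2)).mul_const (‖d‖ ^ 2))
    refine this.congr_deriv ?_
    simp only [inner_sub_left, one_mul, Nat.cast_ofNat, Nat.add_one_sub_one, pow_one]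
    ring
  have hφ'_nonneg :
      ∀ t ∈ interior (Icc (0 : ℝ) 1), 0 ≤ ⟪f' (x + t • d) - f' x, d⟫ + M * t * ‖d‖ ^ 2 := by
    intro t ht
    rw [interior_Icc] at ht
    have hnorm : ‖f' (x + t • d) - f' x‖ ≤ M * t * ‖d‖ := by
      simpa [norm_smul, abs_of_pos ht.1, mul_assoc] using hlip (x + t • d) x
    have := (abs_le.mp (abs_real_inner_le_norm (f' (x + t • d) - f' x) d)).1
    nlinarith [mul_le_mul_of_nonneg_right hnorm (norm_nonneg d)]
  have hmono : MonotoneOn φ (Icc 0 1) :=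
    monotoneOn_of_hasDerivWithinAt_nonneg (convex_Icc 0 1)
      (fun t _ ↦ (hφ' t).continuousAt.continuousWithinAt)
      (fun t _ ↦ (hφ' t).hasDerivWithinAt) hφ'_nonneg
  have := hmono (left_mem_Icc.mpr zero_le_one) (right_mem_Icc.mpr zero_le_one) zero_le_one
  simp only [φ, zero_smul, add_zero, zero_mul, one_smul, one_mul, one_pow] at this
  linarith

theorem real_inner_sub_le_zero_of_forall_norm_sub_le {K : Set E} (hK : Convex ℝ K) {u v : E}
    (hv : v ∈ K) (hmin : ∀ w ∈ K, ‖u - v‖ ≤ ‖u - w‖) : ∀ w ∈ K, ⟪u - v, w - v⟫ ≤ 0 := by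
  have : Nonempty K := ⟨⟨v, hv⟩⟩
  rw [← norm_eq_iInf_iff_real_inner_le_zero hK hv]
  exact le_antisymm (le_ciInf fun w ↦ hmin w w.2)
    (ciInf_le ⟨0, by rintro _ ⟨w, rfl⟩; positivity⟩ (⟨v, hv⟩ : K))

theorem norm_sub_sq_le_mul_inner_of_forall_norm_sub_le {K : Set E} (hK : Convex ℝ K) {y g v : E}
    {η : ℝ} (hy : y ∈ K) (hv : v ∈ K) (hmin : ∀ w ∈ K, ‖y + η • g - v‖ ≤ ‖y + η • g - w‖) :
    ‖v - y‖ ^ 2 ≤ η * ⟪g, v - y⟫ := by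
  have := real_inner_sub_le_zero_of_forall_norm_sub_le hK hv hmin y hy
  rw [show y + η • g - v = η • g - (v - y) by abel, show y - v = -(v - y) by abel,
    inner_neg_right, inner_sub_left, real_inner_smul_left, real_inner_self_eq_norm_sq] at this
  linarith

theorem apply_add_norm_sub_sq_div_le_of_projected_gradient_step [CompleteSpace E] {K : Set E}
    (hK : Convex ℝ K) {f : E → ℝ} {f' : E → E} {M : ℝ} (hf : ∀ x, HasGradientAt f (f' x) x)
    (hlip : ∀ x y, ‖f' x - f' y‖ ≤ M * ‖x - y‖) {y v : E} {η : ℝ} (hη : 0 < η) (hMη : M * η ≤ 1)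
    (hy : y ∈ K) (hv : v ∈ K) (hmin : ∀ w ∈ K, ‖y + η • f' y - v‖ ≤ ‖y + η • f' y - w‖) :
    f y + ‖v - y‖ ^ 2 / (2 * η) ≤ f v := by
  have hdescent := apply_add_ge_of_gradient_lipschitz hf hlip y (v - y)
  rw [add_sub_cancel] at hdescent
  have hstep := norm_sub_sq_le_mul_inner_of_forall_norm_sub_le hK hy hv hmin
  have hgain : ‖v - y‖ ^ 2 / (2 * η) ≤ f v - f y := by
    rw [div_le_iff₀ (by positivity)]
    nlinarith [mul_le_mul_of_nonneg_right hMη (sq_nonneg ‖v - y‖)]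
  linarith

end

theorem gradMap_sq_le_optimality_gap_general (m : ℕ)
    (Y : Set (Euc m)) (hYconv : Convex ℝ Y) (hYcpt : IsCompact Y)
    (M : ℝ)
    (h : Euc m → ℝ) (h' : Euc m → Euc m)
    (hdiff : ∀ y, HasGradientAt h (h' y) y)
    (hlip : ∀ y₁ y₂ : Euc m, ‖h' y₁ - h' y₂‖ ≤ M * ‖y₁ - y₂‖)
    (projY : Euc m → Euc m)
    (hproj : ∀ z, projY z ∈ Y ∧ ∀ w ∈ Y, ‖z - projY z‖ ≤ ‖z - w‖) :
    ∀ y ∈ Y, ∀ η : ℝ, 0 < η → η ≤ 1 / M →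
      ‖η⁻¹ • (projY (y + η • h' y) - y)‖ ^ 2 ≤ 2 / η * (sSup (h '' Y) - h y) := by
  intro y hy η hη hηM
  set v := projY (y + η • h' y)
  obtain ⟨hvY, hmin⟩ := hproj (y + η • h' y)
  have hM : 0 < M := one_div_pos.mp (hη.trans_le hηM)
  have hMη : M * η ≤ 1 := by rwa [le_div_iff₀ hM, mul_comm] at hηM
  have hascent := apply_add_norm_sub_sq_div_le_of_projected_gradient_step hYconv hdiff hlip hη hMη
    hy hvY hmin
  have hcont : Continuous h := continuous_iff_continuousAt.2 fun z ↦ (hdiff z).continuousAt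
  have hmax : h v ≤ sSup (h '' Y) := le_csSup (hYcpt.image hcont).bddAbove (mem_image_of_mem h hvY)
  calc ‖η⁻¹ • (v - y)‖ ^ 2 = 2 / η * (‖v - y‖ ^ 2 / (2 * η)) := by
        rw [norm_smul, mul_pow, norm_inv, Real.norm_of_nonneg hη.le]
        field_simp
    _ ≤ 2 / η * (sSup (h '' Y) - h y) := by gcongr; linarith

/-- on a convex compact set `Y`, for `h` with `M`-Lipschitz gradient and
`0 < η ≤ 1/M`, the gradient mapping `G_Y(y, ∇h(y), η) = (Π_Y(y + η∇h(y)) − y)/η` satisfies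
`‖G_Y(y, ∇h(y), η)‖² ≤ (2/η)(max_{y'∈Y} h(y') − h(y))`. -/
theorem gradMap_sq_le_optimality_gap (m : ℕ)
    (Y : Set (Euc m)) (hYne : Y.Nonempty) (hYconv : Convex ℝ Y) (hYcpt : IsCompact Y)
    (M : ℝ) (hM : 0 < M)
    (h : Euc m → ℝ) (h' : Euc m → Euc m)
    (hdiff : ∀ y, HasGradientAt h (h' y) y)
    (hlip : ∀ y₁ y₂ : Euc m, ‖h' y₁ - h' y₂‖ ≤ M * ‖y₁ - y₂‖)
    (projY : Euc m → Euc m)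
    (hproj : ∀ z, projY z ∈ Y ∧ ∀ w ∈ Y, ‖z - projY z‖ ≤ ‖z - w‖) :
    ∀ y ∈ Y, ∀ η : ℝ, 0 < η → η ≤ 1 / M →
      ‖η⁻¹ • (projY (y + η • h' y) - y)‖ ^ 2 ≤ 2 / η * (sSup (h '' Y) - h y) :=
  gradMap_sq_le_optimality_gap_general m Y hYconv hYcpt M h h' hdiff hlip projY hproj
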